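/- Let $S^1,\ldots,S^d>0$ and $\mu^{ij}\in[0,1)$ with $\mu^{ii}=0$. Define $\hat{K}=\{(x^1/S^1,\ldots,x^d/S^d): x\in K(\Pi)\}$ and its dual cone $\hat{K}^+=\{z\in\mathbb{R}^d: z^{\mathsf{T}}x\geq 0\ \forall x\in\hat{K}\}$. Then $z\in\hat{K}^+$ if and only if, for all $i,j\in[d]\setminus\{1\}$: $(1-\mu^{i1})\frac{z^1}{S^1}\leq\frac{z^i}{S^i}\leq(1+\mu^{1i})\frac{z^1}{S^1}$ and $\frac{z^j}{S^j}-\frac{z^i}{S^i}\leq\mu^{ij}\frac{z^1}{S^1}$. -/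
import Mathlib


open Pointwise BigOperators Matrix

/-- Characterization of the dual of the solvency cone in physical units. -/
theorem dual_solvency_cone_characterization
    (d : ℕ) [NeZero d] (μ : Fin d → Fin d → ℝ)
    (hμ : ∀ i j, 0 ≤ μ i j ∧ μ i j < 1) (hμdiag : ∀ i, μ i i = 0)
    (S : Fin d → ℝ) (hS : ∀ i, 0 < S i)
    (Pi : Matrix (Fin d) (Fin d) ℝ)
    (hPi : ∀ i j : Fin d,
      Pi i j = if i = 0 then (if j = 0 then 1 else 1 + μ i j)
               else (if j = 0 then -(1 - μ i j) else μ i j))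
    (E : Fin d → Matrix (Fin d) (Fin d) ℝ)
    (hE : ∀ i k l : Fin d, E i k l = if k = i then 1 else 0)
    (Mpos : Set (Matrix (Fin d) (Fin d) ℝ))
    (hMpos : Mpos = {A | (∀ i j, 0 ≤ A i j) ∧ ∀ i, A i i = 0})
    (K : Set (Fin d → ℝ))
    (hK : K = {x | ∃ A ∈ Mpos,
      x 0 = ∑ i, ∑ j, A i j * Pi i j ∧
      ∀ i : Fin d, i ≠ 0 → x i = ∑ k, ∑ l, (A k l - Aᵀ k l) * E i k l})
    (Khat : Set (Fin d → ℝ))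
    (hKhat : Khat = {xh | ∃ x ∈ K, xh = fun i => x i / S i})
    (KhatDual : Set (Fin d → ℝ))
    (hKhatDual : KhatDual = {z | ∀ x ∈ Khat, 0 ≤ ∑ i, z i * x i})
    (z : Fin d → ℝ) :
    z ∈ KhatDual ↔
      ∀ i : Fin d, i ≠ 0 → ∀ j : Fin d, j ≠ 0 →
        (1 - μ i 0) * (z 0 / S 0) ≤ z i / S i ∧
        z i / S i ≤ (1 + μ 0 i) * (z 0 / S 0) ∧
        z j / S j - z i / S i ≤ μ i j * (z 0 / S 0) := by
  subst hMpos hK hKhat hKhatDual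
  set w : Fin d → ℝ := fun i => z i / S i with hw
  set g : Fin d → ℝ := fun i => if i = 0 then 0 else w i with hg
  set c : Fin d → Fin d → ℝ := fun k l => w 0 * Pi k l + g k - g l with hc
  -- Key identity: the pairing equals a double sum against c
  have key : ∀ (A : Matrix (Fin d) (Fin d) ℝ) (x : Fin d → ℝ),
      x 0 = (∑ i, ∑ j, A i j * Pi i j) →
      (∀ i : Fin d, i ≠ 0 → x i = ∑ k, ∑ l, (A k l - Aᵀ k l) * E i k l) →
      ∑ i, z i * (x i / S i) = ∑ k, ∑ l, A k l * c k l := by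
    intro A x hx0 hxi
    have hxi' : ∀ i : Fin d, i ≠ 0 → x i = ∑ l, (A i l - A l i) := by
      intro i hi
      rw [hxi i hi, Finset.sum_comm]
      refine Finset.sum_congr rfl fun l _ => ?_
      simp [hE, Matrix.transpose_apply]
    have step1 : ∑ i, z i * (x i / S i) = ∑ i, w i * x i := by
      refine Finset.sum_congr rfl fun i _ => ?_
      simp only [hw]; ring
    have step2 : ∑ i, w i * x i
        = w 0 * x 0 + ∑ i ∈ Finset.univ.erase (0 : Fin d), w i * x i := by
      exact (Finset.add_sum_erase _ (fun i => w i * x i)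
        (Finset.mem_univ (0 : Fin d))).symm
    have step3 : ∑ i ∈ Finset.univ.erase (0 : Fin d), w i * x i
        = ∑ i, g i * ∑ l, (A i l - A l i) := by
      rw [← Finset.add_sum_erase _ (fun i => g i * ∑ l, (A i l - A l i))
        (Finset.mem_univ (0 : Fin d))]
      have hg0 : g 0 = 0 := by simp [hg]
      rw [hg0, zero_mul, zero_add]
      refine Finset.sum_congr rfl fun i hi => ?_
      rw [Finset.mem_erase] at hi
      rw [hxi' i hi.1]
      simp [hg, hi.1]
    have step4 : ∑ i, g i * ∑ l, (A i l - A l i)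
        = (∑ k, ∑ l, g k * A k l) - (∑ k, ∑ l, g l * A k l) := by
      simp_rw [Finset.mul_sum, mul_sub, Finset.sum_sub_distrib]
      congr 1
      rw [Finset.sum_comm]
    have step5 : w 0 * x 0 = ∑ k, ∑ l, A k l * (w 0 * Pi k l) := by
      rw [hx0, Finset.mul_sum]
      refine Finset.sum_congr rfl fun k _ => ?_
      rw [Finset.mul_sum]
      refine Finset.sum_congr rfl fun l _ => by ring
    rw [step1, step2, step3, step4, step5]
    rw [← Finset.sum_sub_distrib, ← Finset.sum_add_distrib]
    refine Finset.sum_congr rfl fun k _ => ?_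
    rw [← Finset.sum_sub_distrib, ← Finset.sum_add_distrib]
    refine Finset.sum_congr rfl fun l _ => ?_
    simp only [hc]; ring
  -- Membership in the dual is equivalent to nonnegativity of the pairing with all A
  have hmem : (z ∈ {z : Fin d → ℝ | ∀ x ∈ {xh : Fin d → ℝ | ∃ x ∈
        {x : Fin d → ℝ | ∃ A ∈ {A : Matrix (Fin d) (Fin d) ℝ |
          (∀ i j, 0 ≤ A i j) ∧ ∀ i, A i i = 0},
          x 0 = ∑ i, ∑ j, A i j * Pi i j ∧
          ∀ i : Fin d, i ≠ 0 → x i = ∑ k, ∑ l, (A k l - Aᵀ k l) * E i k l},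
        xh = fun i => x i / S i}, 0 ≤ ∑ i, z i * x i}) ↔
      ∀ A : Matrix (Fin d) (Fin d) ℝ, (∀ i j, 0 ≤ A i j) → (∀ i, A i i = 0) →
        0 ≤ ∑ k, ∑ l, A k l * c k l := by
    simp only [Set.mem_setOf_eq]
    constructor
    · intro hz A hA1 hA2
      set x : Fin d → ℝ := fun i => if i = 0 then ∑ i, ∑ j, A i j * Pi i j
        else ∑ k, ∑ l, (A k l - Aᵀ k l) * E i k l with hx
      have h1 : x 0 = ∑ i, ∑ j, A i j * Pi i j := by simp [hx]
      have h2 : ∀ i : Fin d, i ≠ 0 →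
          x i = ∑ k, ∑ l, (A k l - Aᵀ k l) * E i k l := by
        intro i hi; simp [hx, hi]
      have := hz (fun i => x i / S i) ⟨x, ⟨A, ⟨hA1, hA2⟩, h1, h2⟩, rfl⟩
      rwa [key A x h1 h2] at this
    · rintro h xh ⟨x, ⟨A, ⟨hA1, hA2⟩, h1, h2⟩, rfl⟩
      have := h A hA1 hA2
      rw [← key A x h1 h2] at this
      exact this
  rw [hmem]
  constructor
  · intro hA i hi j hj
    have hsingle : ∀ k l : Fin d, k ≠ l → 0 ≤ c k l := by
      intro k l hkl
      have hA1 : ∀ a b : Fin d,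
          (0:ℝ) ≤ if a = k ∧ b = l then 1 else 0 := by
        intro a b; split <;> norm_num
      have hA2 : ∀ a : Fin d,
          (if a = k ∧ a = l then (1:ℝ) else 0) = 0 := by
        intro a
        by_cases h : a = k ∧ a = l
        · exact absurd (h.1.symm.trans h.2) hkl
        · rw [if_neg h]
      have := hA (fun a b => if a = k ∧ b = l then 1 else 0) hA1 hA2
      have hsum : ∑ a, ∑ b, (if a = k ∧ b = l then (1:ℝ) else 0) * c a b
          = c k l := by
        have heq : ∀ a b : Fin d,
            (if a = k ∧ b = l then (1:ℝ) else 0) * c a b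
            = if a = k then (if b = l then c k l else 0) else 0 := by
          intro a b
          by_cases h1 : a = k <;> by_cases h2 : b = l <;> simp [h1, h2]
        simp_rw [heq]
        simp
      rwa [hsum] at this
    refine ⟨?_, ?_, ?_⟩
    · have h1 := hsingle i 0 hi
      simp only [hc, hg, hPi, hw, hi, if_false, if_neg hi, if_pos rfl] at h1
      simp only [↓reduceIte] at h1
      linarith
    · have h1 := hsingle 0 i (Ne.symm hi)
      simp only [hc, hg, hPi, hw, hi, if_false, if_neg hi, if_pos rfl] at h1
      simp only [↓reduceIte] at h1
      linarith
    · by_cases hij : i = j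
      · subst hij
        rw [hμdiag i]
        simp
      · have h1 := hsingle i j hij
        simp only [hc, hg, hPi, hw, hi, hj, if_false, if_neg hi, if_neg hj] at h1
        linarith
  · intro h A hA1 hA2
    have hcpos : ∀ k l : Fin d, k ≠ l → 0 ≤ c k l := by
      intro k l hkl
      by_cases hk : k = 0
      · subst hk
        have hl : l ≠ 0 := fun hl0 => hkl hl0.symm
        have := (h l hl l hl).2.1
        simp only [hc, hg, hPi, hw, hl, if_pos rfl, if_neg hl]
        simp only [↓reduceIte]
        linarith
      · by_cases hl : l = 0
        · subst hl
          have := (h k hk k hk).1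
          simp only [hc, hg, hPi, hw, hk, if_pos rfl, if_neg hk]
          simp only [↓reduceIte]
          linarith
        · have := (h k hk l hl).2.2
          simp only [hc, hg, hPi, hw, if_neg hk, if_neg hl]
          linarith
    refine Finset.sum_nonneg fun k _ => Finset.sum_nonneg fun l _ => ?_
    by_cases hkl : k = l
    · subst hkl
      rw [hA2 k, zero_mul]
    · exact mul_nonneg (hA1 k l) (hcpos k l hkl)
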